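/- arXiv:2407.01835 — 2 statements merged into one kernel-verified Lean document; each statement's English description precedes it below -/
import Mathlib

section
/- Every finite subset A of the nonzero integers has an ordering a_1, ..., a_{|A|} of its elements such that the partial sums a_1, a_1+a_2, ..., a_1+...+a_{|A|} are pairwise distinct. -/
/-- The partial sums a₁, a₁+a₂, ..., a₁+⋯+aₙ of the list are pairwise distinct. -/
def ValidOrdering {G : Type*} [AddCommGroup G] (l : List G) : Prop :=
  ((List.range l.length).map (fun i => (l.take (i + 1)).sum)).Nodup

/-- `l` is an ordering (an enumeration without repetition) of the finite set `A`. -/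
def IsOrderingOf {G : Type*} [AddCommGroup G] (l : List G) (A : Finset G) : Prop :=
  l.Nodup ∧ ∀ a, a ∈ l ↔ a ∈ A

/-!
Let `P` be the positive elements and `N` the negative ones, and list `P` first, then `N`.
The partial sums rise strictly and then fall strictly, so the only possible coincidences are
`s = ΣP - q` with `s` a partial sum of the positive part and `q` one of `-N`. Then `ΣP - s` is
a partial sum of the positive part read backwards, so it suffices to order `P` and `-N` so that
their nonempty partial sums meet at most in a common total. This is done by induction on
`|P| + |N|`: from the set whose sum is not smaller, remove an element whose removal does not make
the two sums equal, order the rest by induction (the partial sums are then disjoint), and put the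
removed element last, where its partial sum is the larger total.
-/

open Pointwise

namespace List

variable {G : Type*} [AddCommGroup G]

theorem partialSums_concat (l : List G) (a : G) :
    (l ++ [a]).partialSums = l.partialSums ++ [l.sum + a] := by
  simp [partialSums_append, partialSums_cons]

theorem partialSums_map_neg (l : List G) :
    (l.map (-·)).partialSums = l.partialSums.map (-·) := by
  induction l with
  | nil => simp
  | cons a l ih => simp [partialSums_cons, ih, Function.comp_def, add_comm]

theorem map_sum_sub_partialSums (l : List G) :
    l.partialSums.map (l.sum - ·) = l.reverse.partialSums.reverse := by
  induction l with
  | nil => simp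
  | cons a l ih =>
    simp [partialSums_cons, partialSums_concat, ← ih, Function.comp_def, add_comm]

theorem mem_partialSums_iff {l : List G} {s : G} :
    s ∈ l.partialSums ↔ s = 0 ∨ s ∈ l.partialSums.tail := by
  cases l <;> simp [partialSums_cons]

section Ordered

variable [LinearOrder G] [IsOrderedAddMonoid G] {l : List G} {s : G}

theorem nonneg_of_mem_partialSums (hl : ∀ a ∈ l, 0 ≤ a) (hs : s ∈ l.partialSums) :
    0 ≤ s := by
  induction l generalizing s with
  | nil => simp_all
  | cons a l ih =>
    rw [forall_mem_cons] at hl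
    simp only [partialSums_cons, mem_cons, mem_map] at hs
    obtain rfl | ⟨t, ht, rfl⟩ := hs
    · rfl
    · exact add_nonneg hl.1 (ih hl.2 ht)

theorem le_sum_of_mem_partialSums (hl : ∀ a ∈ l, 0 ≤ a) (hs : s ∈ l.partialSums) :
    s ≤ l.sum := by
  induction l generalizing s with
  | nil => simp_all
  | cons a l ih =>
    rw [forall_mem_cons] at hl
    simp only [partialSums_cons, mem_cons, mem_map] at hs
    obtain rfl | ⟨t, ht, rfl⟩ := hs
    · exact add_nonneg hl.1 (sum_nonneg hl.2)
    · simpa using ih hl.2 ht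

theorem pos_of_mem_tail_partialSums (hl : ∀ a ∈ l, 0 < a) (hs : s ∈ l.partialSums.tail) :
    0 < s := by
  cases l with
  | nil => simp_all
  | cons a l =>
    rw [forall_mem_cons] at hl
    simp only [partialSums_cons, tail_cons, mem_map] at hs
    obtain ⟨t, ht, rfl⟩ := hs
    exact add_pos_of_pos_of_nonneg hl.1
      (nonneg_of_mem_partialSums (fun b hb => (hl.2 b hb).le) ht)

theorem pairwise_lt_partialSums (hl : ∀ a ∈ l, 0 < a) : l.partialSums.Pairwise (· < ·) := by
  induction l with
  | nil => simp
  | cons a l ih =>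
    have hpos := fun s => pos_of_mem_tail_partialSums (s := s) hl
    rw [partialSums_cons, tail_cons] at hpos
    rw [partialSums_cons, pairwise_cons]
    exact ⟨hpos, (ih fun b hb => hl b (mem_cons_of_mem a hb)).map _
      fun _ _ h => add_lt_add_right h a⟩

theorem nodup_tail_partialSums (hl : ∀ a ∈ l, 0 < a) : l.partialSums.tail.Nodup :=
  ((pairwise_lt_partialSums hl).imp ne_of_lt).sublist (tail_sublist _)

end Ordered

end List

theorem validOrdering_iff_nodup_tail_partialSums {G : Type*} [AddCommGroup G] {l : List G} :
    ValidOrdering l ↔ l.partialSums.tail.Nodup := by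
  suffices l.partialSums.tail = (List.range l.length).map (fun i => (l.take (i + 1)).sum) by
    rw [this, ValidOrdering]
  exact List.ext_getElem (by simp) fun i _ _ => by simp

theorem Finset.Nonempty.exists_sum_erase_ne {G : Type*} [AddCommGroup G] [DecidableEq G]
    {s : Finset G} (hs : s.Nonempty) {c : G} (hc : c ≠ 0) :
    ∃ a ∈ s, ∑ x ∈ s.erase a, x ≠ c := by
  obtain ⟨a, rfl⟩ | ⟨a, ha, b, hb, hab⟩ := hs.exists_eq_singleton_or_nontrivial
  · exact ⟨a, mem_singleton_self a, by simpa using hc.symm⟩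
  by_cases h : ∑ x ∈ s.erase a, x = c
  · refine ⟨b, hb, fun h' => hab ?_⟩
    rw [sum_erase_eq_sub ha, ← h', sum_erase_eq_sub hb] at h
    exact sub_right_injective h
  · exact ⟨a, ha, h⟩

section IsOrderingOf

variable {G : Type*} [AddCommGroup G] {l l₁ l₂ : List G} {X Y : Finset G}

theorem isOrderingOf_toList (X : Finset G) : IsOrderingOf X.toList X :=
  ⟨X.nodup_toList, fun _ => Finset.mem_toList⟩

theorem IsOrderingOf.sum_eq (h : IsOrderingOf l X) : l.sum = ∑ x ∈ X, x := by
  classical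
  have hX : l.toFinset = X := by ext; simp [h.2]
  simp [← hX, List.sum_toFinset _ h.1]

theorem IsOrderingOf.reverse (h : IsOrderingOf l X) : IsOrderingOf l.reverse X :=
  ⟨List.nodup_reverse.2 h.1, fun a => List.mem_reverse.trans (h.2 a)⟩

theorem IsOrderingOf.map_neg [DecidableEq G] (h : IsOrderingOf l X) :
    IsOrderingOf (l.map (-·)) (-X) :=
  ⟨h.1.map neg_injective, fun a => by simp [h.2, neg_eq_iff_eq_neg]⟩

theorem IsOrderingOf.append [DecidableEq G] (h₁ : IsOrderingOf l₁ X)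
    (h₂ : IsOrderingOf l₂ Y) (h : Disjoint X Y) : IsOrderingOf (l₁ ++ l₂) (X ∪ Y) :=
  ⟨List.nodup_append.2 ⟨h₁.1, h₂.1, fun a ha b hb hab =>
      Finset.disjoint_left.1 h ((h₁.2 a).1 ha) (hab ▸ (h₂.2 b).1 hb)⟩,
    fun a => by simp [h₁.2, h₂.2]⟩

theorem IsOrderingOf.concat [DecidableEq G] {a : G} (h : IsOrderingOf l (X.erase a))
    (ha : a ∈ X) : IsOrderingOf (l ++ [a]) X := by
  simpa [Finset.insert_erase ha] using
    h.append (l₂ := [a]) (Y := {a}) ⟨by simp, by simp⟩ (by simp)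

end IsOrderingOf

section Ordered

variable {G : Type*} [AddCommGroup G] [LinearOrder G] [IsOrderedAddMonoid G]

open Finset List in
theorem exists_isOrderingOf_partialSums_common_eq_sum {X Y : Finset G} (hX : ∀ x ∈ X, 0 < x)
    (hY : ∀ y ∈ Y, 0 < y) :
    ∃ u v : List G, IsOrderingOf u X ∧ IsOrderingOf v Y ∧
      ∀ s ∈ u.partialSums.tail, s ∈ v.partialSums.tail → s = u.sum ∧ s = v.sum := by
  classical
  induction hn : #X + #Y using Nat.strong_induction_on generalizing X Y with | _ n ih
  wlog hXY : ∑ x ∈ X, x ≤ ∑ y ∈ Y, y generalizing X Y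
  · obtain ⟨v, u, hv, hu, h⟩ := this hY hX (by rw [add_comm, hn]) (le_of_not_ge hXY)
    exact ⟨u, v, hu, hv, fun s hsu hsv => (h s hsv hsu).symm⟩
  rcases X.eq_empty_or_nonempty with rfl | hXne
  · exact ⟨[], Y.toList, ⟨nodup_nil, by simp⟩, isOrderingOf_toList Y, by simp⟩
  have hXpos : 0 < ∑ x ∈ X, x := sum_pos hX hXne
  have hYne : Y.Nonempty := nonempty_of_sum_ne_zero (hXpos.trans_le hXY).ne'
  obtain ⟨y, hy, hsum⟩ := hYne.exists_sum_erase_ne hXpos.ne'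
  obtain ⟨u, v, hu, hv, huv⟩ := ih _ (hn ▸ Nat.add_lt_add_left (card_erase_lt_of_mem hy) _) hX
    (Y := Y.erase y) (fun z hz => hY z (mem_of_mem_erase hz)) rfl
  refine ⟨u, v ++ [y], hu, hv.concat hy, fun s hsu hsv => ?_⟩
  rw [partialSums_concat, tail_append_of_ne_nil partialSums_ne_nil, mem_append,
    List.mem_singleton] at hsv
  rcases hsv with hsv | rfl
  · rw [hu.sum_eq, hv.sum_eq] at huv
    exact absurd ((huv s hsu hsv).2.symm.trans (huv s hsu hsv).1) hsum
  · refine ⟨le_antisymm (le_sum_of_mem_partialSums (fun a ha => (hX a ((hu.2 a).1 ha)).le)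
      (mem_of_mem_tail hsu)) ?_, by simp⟩
    simpa [hu.sum_eq, ← (hv.concat hy).sum_eq] using hXY

open List in
theorem validOrdering_reverse_append_map_neg {u v : List G} (hu : ∀ a ∈ u, 0 < a)
    (hv : ∀ a ∈ v, 0 < a)
    (huv : ∀ s ∈ u.partialSums.tail, s ∈ v.partialSums.tail → s = u.sum) :
    ValidOrdering (u.reverse ++ v.map (-·)) := by
  have hu' : ∀ a ∈ u.reverse, 0 < a := by simpa using hu
  rw [validOrdering_iff_nodup_tail_partialSums, partialSums_append,
    tail_append_of_ne_nil partialSums_ne_nil, partialSums_map_neg, ← map_tail, map_map,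
    sum_reverse, nodup_append]
  refine ⟨nodup_tail_partialSums hu',
    (nodup_tail_partialSums hv).map fun a b h => by simpa using h, ?_⟩
  rintro t ht _ hq rfl
  obtain ⟨q, hq, hqt⟩ := mem_map.1 hq
  have hq_mem : q ∈ u.partialSums := by
    have := mem_map_of_mem (f := (u.reverse.sum - ·)) (mem_of_mem_tail ht)
    rw [map_sum_sub_partialSums, reverse_reverse, mem_reverse, sum_reverse, ← hqt] at this
    simpa using this
  obtain rfl | hq_tail := mem_partialSums_iff.1 hq_mem
  · exact (pos_of_mem_tail_partialSums hv hq).ne' rfl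
  · have hq_sum := huv q hq_tail hq
    subst hqt
    exact (pos_of_mem_tail_partialSums hu' ht).ne' (by simp [hq_sum])

theorem exists_validOrdering {A : Finset G} (hA : 0 ∉ A) :
    ∃ l : List G, IsOrderingOf l A ∧ ValidOrdering l := by
  classical
  set P := A.filter (0 < ·)
  set N := A.filter (· < 0)
  have hP : ∀ x ∈ P, 0 < x := by simp [P]
  have hN : ∀ y ∈ -N, 0 < y := by simp [N]
  have hA_eq : P ∪ N = A := by
    ext a
    have := fun ha : a ∈ A => (ne_of_mem_of_not_mem ha hA).lt_or_gt
    simp only [P, N, Finset.mem_union, Finset.mem_filter]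
    tauto
  obtain ⟨u, v, hu, hv, huv⟩ := exists_isOrderingOf_partialSums_common_eq_sum hP hN
  have hv' := hv.map_neg
  rw [neg_neg] at hv'
  refine ⟨u.reverse ++ v.map (-·), ?_, validOrdering_reverse_append_map_neg
    (fun a ha => hP a ((hu.2 a).1 ha)) (fun a ha => hN a ((hv.2 a).1 ha))
    fun s hsu hsv => (huv s hsu hsv).1⟩
  rw [← hA_eq]
  exact hu.reverse.append hv' (Finset.disjoint_filter.2 fun _ _ h => h.asymm)

end Ordered

theorem graham_integers (A : Finset ℤ) (hA : (0 : ℤ) ∉ A) :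
    ∃ l : List ℤ, IsOrderingOf l A ∧ ValidOrdering l :=
  exists_validOrdering hA
end

section
/- Let A be a finite subset of an abelian group G with 0 ∈ A and |A| = n ≥ 2, let B be a finite subset of another abelian group, and let f : A → B be an (n-1)-Freiman isomorphism with f(0) = 0 that is also a k-Freiman isomorphism for all 1 ≤ k ≤ n-1. If f(A \ {0}) has a valid ordering, then A \ {0} has a valid ordering. -/
/-- `f` is an `ℓ`-Freiman isomorphism from `A` to `B`. -/
def IsFreimanIso {G H : Type*} [AddCommGroup G] [AddCommGroup H]
    (A : Finset G) (B : Finset H) (ℓ : ℕ) (f : G → H) : Prop :=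
  Set.BijOn f A B ∧
    ∀ x y : Fin ℓ → G, (∀ i, x i ∈ A) → (∀ i, y i ∈ A) →
      ((∑ i, x i = ∑ i, y i) ↔ (∑ i, f (x i) = ∑ i, f (y i)))

/-!
Pull the valid ordering of `f (A \ {0})` back along `f`. If two prefix sums of the pulled-back
list, of lengths `i < j ≤ n - 1`, coincided, then padding both prefixes with zeros to `n - 1`
terms gives two equal sums of `n - 1` elements of `A`. Being an `(n - 1)`-Freiman homomorphism
with `f 0 = 0`, `f` maps them to equal sums, which are the corresponding prefix sums of the given
valid ordering: a contradiction.
-/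

open Finset

theorem Multiset.exists_univ_map_eq {α : Type*} {s : Multiset α} {k : ℕ} (hs : card s = k) :
    ∃ x : Fin k → α, univ.val.map x = s := by
  obtain ⟨l, rfl⟩ := Quot.exists_rep s
  obtain rfl : l.length = k := hs
  exact ⟨fun i => l[i], by simp⟩

theorem IsFreimanIso.isAddFreimanIso {G H : Type*} [AddCommGroup G] [AddCommGroup H]
    {A : Finset G} {B : Finset H} {k : ℕ} {f : G → H} (hf : IsFreimanIso A B k f) :
    IsAddFreimanIso k (A : Set G) (B : Set H) f where
  bijOn := hf.1
  map_sum_eq_map_sum s t hsA htA hs ht := by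
    obtain ⟨x, rfl⟩ := Multiset.exists_univ_map_eq hs
    obtain ⟨y, rfl⟩ := Multiset.exists_univ_map_eq ht
    simp only [Multiset.map_map, Function.comp_def]
    exact (hf.2 x y (fun i => hsA (Multiset.mem_map_of_mem _ (mem_univ i)))
      (fun i => htA (Multiset.mem_map_of_mem _ (mem_univ i)))).symm

theorem IsAddFreimanHom.map_sum_eq_map_sum_of_card_le {G H : Type*} [AddCommMonoid G]
    [AddCommMonoid H] {A : Set G} {B : Set H} {n : ℕ} {f : G → H} (hf : IsAddFreimanHom n A B f)
    (hA : 0 ∈ A) (hf0 : f 0 = 0) {s t : Multiset G} (hsA : ∀ x ∈ s, x ∈ A)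
    (htA : ∀ x ∈ t, x ∈ A) (hs : s.card ≤ n) (ht : t.card ≤ n) (h : s.sum = t.sum) :
    (s.map f).sum = (t.map f).sum := by
  have hpadA : ∀ u : Multiset G, (∀ x ∈ u, x ∈ A) →
      ∀ ⦃x⦄, x ∈ u + .replicate (n - u.card) 0 → x ∈ A := by
    intro u huA x hx
    rcases Multiset.mem_add.1 hx with hx | hx
    · exact huA x hx
    · rwa [Multiset.eq_of_mem_replicate hx]
  have hpad := hf.map_sum_eq_map_sum (hpadA s hsA) (hpadA t htA)
    (by simp only [Multiset.card_add, Multiset.card_replicate]; omega)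
    (by simp only [Multiset.card_add, Multiset.card_replicate]; omega) (by simpa using h)
  simpa [hf0] using hpad

theorem validOrdering_iff {G : Type*} [AddCommGroup G] {l : List G} :
    ValidOrdering l ↔ ∀ i < l.length, ∀ j < l.length,
      (l.take (i + 1)).sum = (l.take (j + 1)).sum → i = j := by
  simp [ValidOrdering, List.nodup_map_iff_inj_on List.nodup_range]

theorem ValidOrdering.of_map {G H : Type*} [AddCommGroup G] [AddCommGroup H] {A : Set G}
    {B : Set H} {n : ℕ} {f : G → H} (hf : IsAddFreimanHom n A B f) (hA : 0 ∈ A) (hf0 : f 0 = 0)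
    {l : List G} (hlA : ∀ a ∈ l, a ∈ A) (hn : l.length ≤ n) (hl : ValidOrdering (l.map f)) :
    ValidOrdering l := by
  rw [validOrdering_iff] at hl ⊢
  intro i hi j hj hij
  refine hl i (by simpa using hi) j (by simpa using hj) ?_
  have htakeA : ∀ k, ∀ x ∈ (l.take k : Multiset G), x ∈ A :=
    fun k x hx => hlA x (List.mem_of_mem_take (Multiset.mem_coe.1 hx))
  have := hf.map_sum_eq_map_sum_of_card_le hA hf0 (htakeA (i + 1)) (htakeA (j + 1))
    (by simp only [Multiset.coe_card, List.length_take]; omega)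
    (by simp only [Multiset.coe_card, List.length_take]; omega) (by simpa using hij)
  simpa [List.map_take] using this

theorem IsOrderingOf.length_eq {G : Type*} [AddCommGroup G] [DecidableEq G] {l : List G}
    {S : Finset G} (hl : IsOrderingOf l S) : l.length = S.card := by
  rw [← List.toFinset_card_of_nodup hl.1]
  congr
  ext a
  simp [hl.2 a]

theorem IsOrderingOf.exists_map_eq {G H : Type*} [AddCommGroup G] [AddCommGroup H]
    [DecidableEq H] {S : Finset G} {f : G → H} (hf : Set.InjOn f S) {m : List H}
    (hm : IsOrderingOf m (S.image f)) : ∃ l : List G, IsOrderingOf l S ∧ l.map f = m := by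
  set g := Function.invFunOn f S
  have hgS : ∀ b ∈ m, g b ∈ S ∧ f (g b) = b := by
    intro b hb
    obtain ⟨a, ha, rfl⟩ := Finset.mem_image.1 ((hm.2 b).1 hb)
    exact ⟨Function.invFunOn_mem ⟨a, ha, rfl⟩, Function.invFunOn_eq ⟨a, ha, rfl⟩⟩
  have hmap : (m.map g).map f = m := by
    rw [List.map_map]
    exact (List.map_congr_left fun b hb => (hgS b hb).2).trans (List.map_id m)
  refine ⟨m.map g, ⟨List.Nodup.of_map f (by rw [hmap]; exact hm.1), fun a => ⟨?_, ?_⟩⟩, hmap⟩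
  · intro ha
    obtain ⟨b, hb, rfl⟩ := List.mem_map.1 ha
    exact (hgS b hb).1
  · intro ha
    exact List.mem_map.2 ⟨f a, (hm.2 _).2 (Finset.mem_image_of_mem f ha), hf.leftInvOn_invFunOn ha⟩

theorem valid_ordering_pullback_general {G H : Type*} [AddCommGroup G] [AddCommGroup H]
    [DecidableEq G] [DecidableEq H]
    (A : Finset G) (n : ℕ) (hcard : A.card = n) (h0 : (0 : G) ∈ A)
    (B : Finset H) (f : G → H) (hf : IsFreimanIso A B (n - 1) f) (hf0 : f 0 = 0)
    (hB : ∃ m : List H, IsOrderingOf m ((A.erase 0).image f) ∧ ValidOrdering m) :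
    ∃ l : List G, IsOrderingOf l (A.erase 0) ∧ ValidOrdering l := by
  obtain ⟨m, hm, hmv⟩ := hB
  obtain ⟨l, hl, rfl⟩ := hm.exists_map_eq (hf.1.injOn.mono (coe_subset.2 (erase_subset 0 A)))
  refine ⟨l, hl, hmv.of_map hf.isAddFreimanIso.isAddFreimanHom h0 hf0
    (fun a ha => mem_of_mem_erase ((hl.2 a).1 ha)) ?_⟩
  rw [hl.length_eq, card_erase_of_mem h0, hcard]

theorem valid_ordering_pullback {G H : Type*} [AddCommGroup G] [AddCommGroup H]
    [DecidableEq G] [DecidableEq H]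
    (A : Finset G) (n : ℕ) (hn : 2 ≤ n) (hcard : A.card = n) (h0 : (0 : G) ∈ A)
    (B : Finset H) (f : G → H) (hf : IsFreimanIso A B (n - 1) f) (hf0 : f 0 = 0)
    (hfk : ∀ k : ℕ, 1 ≤ k → k ≤ n - 1 → IsFreimanIso A B k f)
    (hB : ∃ m : List H, IsOrderingOf m ((A.erase 0).image f) ∧ ValidOrdering m) :
    ∃ l : List G, IsOrderingOf l (A.erase 0) ∧ ValidOrdering l :=
  valid_ordering_pullback_general A n hcard h0 B f hf hf0 hB
end
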